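/- arXiv:2309.04244 — 2 statements merged into one kernel-verified Lean document; each statement's English description precedes it below -/
import Mathlib

section
/- Let f be a bent function on F_2^n and Γ a linear hyperplane of F_2^n. Then the restriction h of f to Γ, viewed as a Boolean function in n−1 variables, is a 1-plateaued function (i.e., W_h(y) ∈ {0, ±2^{n/2}} for all y ∈ F_2^{n-1}). -/
/-- Inner product on the Boolean cube. -/
def ip {n : ℕ} (x y : Fin n → ZMod 2) : ZMod 2 := ∑ i, x i * y i

/-- Walsh–Hadamard transform of a Boolean function. -/
def W {n : ℕ} (f : (Fin n → ZMod 2) → ZMod 2) (y : Fin n → ZMod 2) : ℤ :=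
  ∑ x, (-1 : ℤ) ^ (f x + ip x y).val

/-- A Boolean function is bent if all its Walsh–Hadamard values are `±2^(n/2)`. -/
def IsBent {n : ℕ} (f : (Fin n → ZMod 2) → ZMod 2) : Prop :=
  ∀ y, W f y = 2 ^ (n / 2) ∨ W f y = -2 ^ (n / 2)

/-!
Write the hyperplane as `Γ = {u | ip u c = 0}` and extend the linear form `x ↦ ip x y`,
transported to `Γ` along `e`, to a form `ip · a` on the whole space. In
`W_f(a) + W_f(a + c)` the terms with `u ∉ Γ` cancel and those with `u ∈ Γ` double, so
`W_f(a) + W_f(a + c) = 2 W_h(y)`. Both values on the left are `±2^(n/2)`, hence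
`W_h(y) ∈ {0, ±2^(n/2)}`.
-/

open Module

section Cube

variable {m : ℕ}

lemma ip_eq_dotProduct (x y : Fin m → ZMod 2) : ip x y = x ⬝ᵥ y := rfl

lemma ip_add_right (x a b : Fin m → ZMod 2) : ip x (a + b) = ip x a + ip x b :=
  dotProduct_add x a b

lemma neg_one_pow_val_add (s t : ZMod 2) :
    (-1 : ℤ) ^ (s + t).val = (-1) ^ s.val * (-1) ^ t.val := by
  revert s t; decide

lemma one_add_neg_one_pow_val (t : ZMod 2) : 1 + (-1 : ℤ) ^ t.val = if t = 0 then 2 else 0 := by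
  revert t; decide

lemma Module.Dual.exists_ip_eq (φ : Dual (ZMod 2) (Fin m → ZMod 2)) : ∃ a, ∀ x, φ x = ip x a := by
  refine ⟨(dotProductEquiv (ZMod 2) (Fin m)).symm φ, fun x => ?_⟩
  conv_lhs => rw [← (dotProductEquiv (ZMod 2) (Fin m)).apply_symm_apply φ]
  rw [ip_eq_dotProduct, dotProduct_comm]
  rfl

lemma Submodule.exists_forall_ip_eq (Γ : Submodule (ZMod 2) (Fin m → ZMod 2))
    (ψ : Dual (ZMod 2) Γ) : ∃ a, ∀ x : Γ, ip (x : Fin m → ZMod 2) a = ψ x := by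
  obtain ⟨φ, hφ⟩ := LinearMap.exists_extend ψ
  obtain ⟨a, ha⟩ := Module.Dual.exists_ip_eq φ
  exact ⟨a, fun x => by rw [← ha, ← hφ]; rfl⟩

lemma Submodule.exists_mem_iff_ip_eq_zero (Γ : Submodule (ZMod 2) (Fin m → ZMod 2))
    (hΓ : m ≤ finrank (ZMod 2) Γ + 1) : ∃ c, ∀ u, u ∈ Γ ↔ ip u c = 0 := by
  by_cases htop : Γ = ⊤
  · exact ⟨0, fun u => by simp [htop, ip]⟩
  obtain ⟨v, -, hv⟩ := SetLike.exists_of_lt (lt_top_iff_ne_top.2 htop)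
  obtain ⟨φ, hφΓ, hφv⟩ := LinearMap.exists_extend_of_notMem (0 : Dual (ZMod 2) Γ) hv 1
  obtain ⟨c, hc⟩ := Module.Dual.exists_ip_eq φ
  have hle : Γ ≤ LinearMap.ker φ := fun u hu => by
    simpa using congr($hφΓ ⟨u, hu⟩)
  have hker_ne_top : LinearMap.ker φ ≠ ⊤ := by
    rw [Ne, LinearMap.ker_eq_top]
    rintro rfl
    simp at hφv
  have hker_lt := Submodule.finrank_lt hker_ne_top
  rw [finrank_fin_fun] at hker_lt
  have hker : Γ = LinearMap.ker φ := Submodule.eq_of_le_of_finrank_le hle (by omega)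
  exact ⟨c, fun u => by rw [hker, LinearMap.mem_ker, hc]⟩

end Cube

section Walsh

variable {m k : ℕ}

open Finset in
lemma W_add_W_add (f : (Fin m → ZMod 2) → ZMod 2) (a c : Fin m → ZMod 2) :
    W f a + W f (a + c) = 2 * ∑ u with ip u c = 0, (-1 : ℤ) ^ (f u + ip u a).val := by
  rw [W, W, ← sum_add_distrib, mul_sum, sum_filter]
  refine sum_congr rfl fun u _ => ?_
  rw [ip_add_right, ← add_assoc, neg_one_pow_val_add (f u + ip u a), ← mul_one_add,
    one_add_neg_one_pow_val]
  split_ifs <;> ring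

open Finset in
lemma sum_ip_eq_zero_eq_W_comp (f : (Fin m → ZMod 2) → ZMod 2)
    {Γ : Submodule (ZMod 2) (Fin m → ZMod 2)} (e : (Fin k → ZMod 2) ≃ₗ[ZMod 2] Γ)
    {a c : Fin m → ZMod 2} (y : Fin k → ZMod 2) (hc : ∀ u, u ∈ Γ ↔ ip u c = 0)
    (ha : ∀ x, ip (e x : Fin m → ZMod 2) a = ip x y) :
    ∑ u with ip u c = 0, (-1 : ℤ) ^ (f u + ip u a).val =
      W (fun x => f (e x : Fin m → ZMod 2)) y := by
  classical
  rw [sum_subtype _ (p := (· ∈ Γ)) (fun u => by simp [hc u]), W]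
  exact (Fintype.sum_equiv e.toEquiv _ _ fun x => by simp [ha]).symm

lemma exists_W_add_W_add_eq_two_mul_W_comp (f : (Fin m → ZMod 2) → ZMod 2)
    {Γ : Submodule (ZMod 2) (Fin m → ZMod 2)} (hΓ : m ≤ finrank (ZMod 2) Γ + 1)
    (e : (Fin k → ZMod 2) ≃ₗ[ZMod 2] Γ) (y : Fin k → ZMod 2) :
    ∃ a c, W f a + W f (a + c) = 2 * W (fun x => f (e x : Fin m → ZMod 2)) y := by
  obtain ⟨c, hc⟩ := Γ.exists_mem_iff_ip_eq_zero hΓ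
  obtain ⟨a, ha⟩ := Γ.exists_forall_ip_eq ((dotProductEquiv (ZMod 2) (Fin k) y) ∘ₗ e.symm)
  refine ⟨a, c, ?_⟩
  rw [W_add_W_add, sum_ip_eq_zero_eq_W_comp f e y hc fun x => ?_]
  rw [ha, ip_eq_dotProduct, dotProduct_comm]
  simp

end Walsh

lemma Int.eq_zero_or_eq_or_eq_neg_of_add_eq_two_mul {A B w P : ℤ} (hA : A = P ∨ A = -P)
    (hB : B = P ∨ B = -P) (h : A + B = 2 * w) : w = 0 ∨ w = P ∨ w = -P := by
  omega

theorem stmt9_general (n : ℕ)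
    (f : (Fin n → ZMod 2) → ZMod 2) (hf : IsBent f)
    (Γ : Submodule (ZMod 2) (Fin n → ZMod 2))
    (e : (Fin (n - 1) → ZMod 2) ≃ₗ[ZMod 2] Γ) :
    ∀ y, W (fun x => f (e x : Fin n → ZMod 2)) y = 0 ∨
      W (fun x => f (e x : Fin n → ZMod 2)) y = 2 ^ (n / 2) ∨
      W (fun x => f (e x : Fin n → ZMod 2)) y = -2 ^ (n / 2) := by
  intro y
  have hΓ : n ≤ finrank (ZMod 2) Γ + 1 := by
    rw [← e.finrank_eq, finrank_fin_fun]
    omega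
  obtain ⟨a, c, hac⟩ := exists_W_add_W_add_eq_two_mul_W_comp f hΓ e y
  exact Int.eq_zero_or_eq_or_eq_neg_of_add_eq_two_mul (hf a) (hf (a + c)) hac

theorem stmt9 (n : ℕ) (hn : Even n) (hn2 : 2 ≤ n)
    (f : (Fin n → ZMod 2) → ZMod 2) (hf : IsBent f)
    (Γ : Submodule (ZMod 2) (Fin n → ZMod 2))
    (hΓ : Module.finrank (ZMod 2) Γ = n - 1)
    (e : (Fin (n - 1) → ZMod 2) ≃ₗ[ZMod 2] Γ) :
    ∀ y, W (fun x => f (e x : Fin n → ZMod 2)) y = 0 ∨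
      W (fun x => f (e x : Fin n → ZMod 2)) y = 2 ^ (n / 2) ∨
      W (fun x => f (e x : Fin n → ZMod 2)) y = -2 ^ (n / 2) :=
  stmt9_general n f hf Γ e
end

section
/- Let f be a bent function on F_2^n and e a standard basis vector. Then the support of the derivative D_e f (viewed as a function on F_2^{n-1}) is the complement of the support of the Walsh–Hadamard transform of the 1-plateaued function obtained by restricting the dual bent function of f to the hyperplane {x : x_e = 0}. -/
/-- The derivative of `f` in the direction of the `i`-th standard basis vector,
viewed as a function of the remaining `n` variables (i.e., restricted to the
hyperplane `{x : x i = 0}`, identified with `F_2^n` via `Fin.insertNth`). -/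
def deriv' {n : ℕ} (f : (Fin (n + 1) → ZMod 2) → ZMod 2) (i : Fin (n + 1))
    (x : Fin n → ZMod 2) : ZMod 2 :=
  f (i.insertNth 0 x) + f (i.insertNth 1 x)

def chi (a : ZMod 2) : ℤ := (-1 : ℤ) ^ a.val

lemma chi_add : ∀ a b : ZMod 2, chi (a + b) = chi a * chi b := by decide

lemma chi_sum {α : Type*} (s : Finset α) (F : α → ZMod 2) :
    chi (∑ i ∈ s, F i) = ∏ i ∈ s, chi (F i) := by
  induction s using Finset.cons_induction with
  | empty => simp [chi]
  | cons a s h ih => rw [Finset.sum_cons, Finset.prod_cons, chi_add, ih]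

lemma sum_chi_pair (b c : ZMod 2) :
    ∑ a : ZMod 2, chi (a * b + a * c) = if b = c then 2 else 0 := by
  revert b c; decide

lemma orth {k : ℕ} (v w : Fin k → ZMod 2) :
    ∑ z : Fin k → ZMod 2, chi (ip z v + ip z w) = if v = w then 2 ^ k else 0 := by
  have h1 : ∀ z : Fin k → ZMod 2, chi (ip z v + ip z w) = ∏ i, chi (z i * v i + z i * w i) := by
    intro z
    rw [ip, ip, ← Finset.sum_add_distrib, chi_sum]
  simp_rw [h1]
  rw [← Fintype.piFinset_univ, Finset.sum_prod_piFinset Finset.univ (fun i a => chi (a * v i + a * w i))]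
  simp_rw [sum_chi_pair]
  by_cases hvw : v = w
  · simp [hvw]
  · obtain ⟨i, hi⟩ := Function.ne_iff.mp hvw
    rw [if_neg hvw]
    exact Finset.prod_eq_zero (Finset.mem_univ i) (by rw [if_neg hi])

lemma ip_insertNth_zero {n : ℕ} (u : Fin (n+1) → ZMod 2) (i : Fin (n+1)) (z : Fin n → ZMod 2) :
    ip u (i.insertNth 0 z) = ip z (fun k => u (i.succAbove k)) := by
  rw [ip, Fin.sum_univ_succAbove _ i]
  simp [ip, mul_comm]

lemma key {n : ℕ} (f g : (Fin (n+1) → ZMod 2) → ZMod 2)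
    (hg : ∀ y, W f y = chi (g y) * 2 ^ ((n+1)/2)) (i : Fin (n+1)) (x : Fin n → ZMod 2) :
    2 ^ ((n+1)/2) * W (fun z => g (i.insertNth 0 z)) x
      = 2 ^ n * (chi (f (i.insertNth 0 x)) + chi (f (i.insertNth 1 x))) := by
  have step1 : 2 ^ ((n+1)/2) * W (fun z => g (i.insertNth 0 z)) x
      = ∑ z : Fin n → ZMod 2, W f (i.insertNth 0 z) * chi (ip z x) := by
    rw [W, Finset.mul_sum]
    refine Finset.sum_congr rfl fun z _ => ?_
    rw [hg]
    show 2 ^ ((n+1)/2) * chi (g (i.insertNth 0 z) + ip z x) = _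
    rw [chi_add]; ring
  rw [step1]
  have step2 : ∀ z : Fin n → ZMod 2, W f (i.insertNth 0 z) * chi (ip z x)
      = ∑ u : Fin (n+1) → ZMod 2,
          chi (f u) * chi (ip z (fun k => u (i.succAbove k)) + ip z x) := by
    intro z
    rw [W, Finset.sum_mul]
    refine Finset.sum_congr rfl fun u _ => ?_
    show chi (f u + ip u (i.insertNth 0 z)) * chi (ip z x) = _
    rw [chi_add, ip_insertNth_zero, mul_assoc, chi_add]
  simp_rw [step2]
  rw [Finset.sum_comm]
  have step3 : ∀ u : Fin (n+1) → ZMod 2,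
      (∑ z : Fin n → ZMod 2, chi (f u) * chi (ip z (fun k => u (i.succAbove k)) + ip z x))
      = chi (f u) * (if (fun k => u (i.succAbove k)) = x then 2 ^ n else 0) := by
    intro u
    rw [← Finset.mul_sum, orth]
  simp_rw [step3]
  rw [← Equiv.sum_comp (Fin.insertNthEquiv (fun _ => ZMod 2) i)]
  have hins : ∀ (p : ZMod 2 × (Fin n → ZMod 2)),
      (Fin.insertNthEquiv (fun _ => ZMod 2) i) p = i.insertNth p.1 p.2 := fun p => rfl
  simp_rw [hins]
  have hsa : ∀ (a : ZMod 2) (w : Fin n → ZMod 2),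
      (fun k => (i.insertNth a w : Fin (n+1) → ZMod 2) (i.succAbove k)) = w := by
    intro a w; funext k; simp
  rw [Fintype.sum_prod_type]
  have step4 : ∀ a : ZMod 2,
      (∑ w : Fin n → ZMod 2, chi (f (i.insertNth a w)) *
        (if (fun k => (i.insertNth a w : Fin (n+1) → ZMod 2) (i.succAbove k)) = x then 2 ^ n else 0))
      = chi (f (i.insertNth a x)) * 2 ^ n := by
    intro a
    simp_rw [hsa]
    rw [Finset.sum_eq_single x]
    · rw [if_pos rfl]
    · intro b _ hb; rw [if_neg hb, mul_zero]
    · intro h; exact absurd (Finset.mem_univ x) h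
  simp_rw [step4]
  have huniv : (Finset.univ : Finset (ZMod 2)) = {0, 1} := by decide
  rw [huniv, Finset.sum_pair (by decide : (0 : ZMod 2) ≠ 1)]
  ring

lemma chi_cancel : ∀ a b : ZMod 2, a + b ≠ 0 → chi a + chi b = 0 := by decide
lemma chi_ne : ∀ a b : ZMod 2, a + b = 0 → chi a + chi b ≠ 0 := by decide


theorem stmt10 (n : ℕ) (hn : Even (n + 1))
    (f g : (Fin (n + 1) → ZMod 2) → ZMod 2) (hf : IsBent f)
    -- `g` is the dual bent function of `f`: `(-1)^g = 2^{-(n+1)/2} W_f`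
    (hg : ∀ y, W f y = (-1 : ℤ) ^ (g y).val * 2 ^ ((n + 1) / 2))
    (i : Fin (n + 1)) :
    {x : Fin n → ZMod 2 | deriv' f i x ≠ 0} =
      {x : Fin n → ZMod 2 | W (fun z => g (i.insertNth 0 z)) x ≠ 0}ᶜ := by
  ext x
  simp only [Set.mem_setOf_eq, Set.mem_compl_iff, not_not]
  have E := key f g hg i x
  have hd : deriv' f i x = f (i.insertNth 0 x) + f (i.insertNth 1 x) := rfl
  constructor
  · intro h
    rw [hd] at h
    rw [chi_cancel _ _ h, mul_zero] at E
    rcases mul_eq_zero.mp E with h2 | h2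
    · exact absurd h2 (by positivity)
    · exact h2
  · intro h
    rw [hd]
    intro h0
    rw [h, mul_zero] at E
    exact (mul_ne_zero (by positivity) (chi_ne _ _ h0)) E.symm
end
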